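/- arXiv:1011.3761 — 3 statements merged into one kernel-verified Lean document; each statement's English description precedes it below -/
import Mathlib

section
/- (Tangent/Gibbs inequality for the conditional empirical entropy.) Let m* be a |𝒴|×|𝒴|^k matrix with strictly positive entries and let m be any |𝒴|×|𝒴|^k matrix with nonnegative entries. Then H(m) ≤ H(m*) + Σ_{β∈𝒴} Σ_{b∈𝒴^k} λ*_{β,b}·(m_{β,b} − m*_{β,b}), where λ*_{β,b} = log((Σ_{β'∈𝒴} m*_{β',b})/m*_{β,b}). Equivalently, H(m) ≤ Σ_{β,b} λ*_{β,b}·m_{β,b}. -/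
/-- The entropy `𝓗(v)` of the (unnormalized) nonnegative vector `v`:
`𝓗(v) = ∑ i, (v i / ‖v‖₁) * log (‖v‖₁ / v i)` if `v ≠ 0`, and `𝓗(0) = 0`,
where for a vector with nonnegative components `‖v‖₁ = ∑ i, v i`. -/
noncomputable def vecEnt {ι : Type*} [Fintype ι] (v : ι → ℝ) : ℝ :=
  @ite ℝ (v = 0) (Classical.propDecidable _) 0
    (∑ i, (v i / ∑ j, v j) * Real.log ((∑ j, v j) / v i))

/-- Conditional empirical entropy of a `|𝒴| × |𝒴|^k` matrix `m` with nonnegative entries: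
`H(m) = ∑_{b ∈ 𝒴^k} (∑_{β ∈ 𝒴} m_{β,b}) ⬝ 𝓗(m_{·,b})`. -/
noncomputable def condEnt {Y : Type*} [Fintype Y] {k : ℕ} (m : Y → (Fin k → Y) → ℝ) : ℝ :=
  ∑ b : Fin k → Y, (∑ β : Y, m β b) * vecEnt (fun β => m β b)

/-!
Each column contributes `∑_β m_{β,b} log(s_b / m_{β,b})` with `s_b = ∑_β m_{β,b}`, and Gibbs'
inequality lets the distribution `m_{·,b}/s_b` inside the logarithm be replaced by any other one,
here `m*_{·,b}/s*_b`. The right-hand side is linear in `m` and agrees with `H` at `m*`, which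
gives the tangent form of the inequality.
-/

open Real Finset

-- The junk value `log 0 = 0` makes this hold for every `v`, with no sign conditions.
lemma sum_mul_vecEnt {ι : Type*} [Fintype ι] (v : ι → ℝ) :
    (∑ i, v i) * vecEnt v = ∑ i, log ((∑ j, v j) / v i) * v i := by
  rw [vecEnt]
  split_ifs with hv
  · simp [hv]
  rw [mul_sum]
  refine sum_congr rfl fun i _ => ?_
  rcases eq_or_ne (∑ j, v j) 0 with hs | hs
  · simp [hs]
  · field_simp

lemma mul_log_div_sub_mul_log_div_le {v s w S : ℝ} (hv : 0 ≤ v) (hs : 0 < s) (hw : 0 < w)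
    (hS : 0 < S) : log (s / v) * v - log (S / w) * v ≤ s * w / S - v := by
  rcases hv.eq_or_lt with rfl | hv
  · simp only [mul_zero, sub_zero]
    positivity
  have hlog : log (s / v) - log (S / w) = log (s * w / S / v) := by
    rw [← log_div (by positivity) (by positivity)]
    congr 1
    field_simp
  have hle := log_le_sub_one_of_pos (show 0 < s * w / S / v by positivity)
  calc log (s / v) * v - log (S / w) * v = log (s * w / S / v) * v := by rw [← hlog, sub_mul]
    _ ≤ (s * w / S / v - 1) * v := by gcongr
    _ = s * w / S - v := by field_simp

lemma sum_log_div_mul_le {ι : Type*} [Fintype ι] (v w : ι → ℝ) (hv : ∀ i, 0 ≤ v i)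
    (hw : ∀ i, 0 < w i) :
    ∑ i, log ((∑ j, v j) / v i) * v i ≤ ∑ i, log ((∑ j, w j) / w i) * v i := by
  set s := ∑ j, v j
  set S := ∑ j, w j
  rcases (sum_nonneg fun i _ => hv i).eq_or_lt with hs | hs
  · have hv0 : ∀ i, v i = 0 := fun i =>
      (sum_eq_zero_iff_of_nonneg fun j _ => hv j).mp hs.symm i (mem_univ i)
    simp [hv0]
  have : Nonempty ι := (nonempty_of_sum_ne_zero hs.ne').elim fun i _ => ⟨i⟩
  have hS : 0 < S := sum_pos (fun j _ => hw j) univ_nonempty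
  suffices ∑ i, (log (s / v i) * v i - log (S / w i) * v i) ≤ 0 by
    rwa [sum_sub_distrib, sub_nonpos] at this
  calc ∑ i, (log (s / v i) * v i - log (S / w i) * v i) ≤ ∑ i, (s * w i / S - v i) :=
        sum_le_sum fun i _ => mul_log_div_sub_mul_log_div_le (hv i) hs (hw i) hS
    _ = 0 := by rw [sum_sub_distrib, ← sum_div, ← mul_sum, mul_div_cancel_right₀ _ hS.ne', sub_self]

lemma condEnt_eq_sum {Y : Type*} [Fintype Y] {k : ℕ} (m : Y → (Fin k → Y) → ℝ) :
    condEnt m = ∑ β, ∑ b, log ((∑ β', m β' b) / m β b) * m β b := by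
  rw [sum_comm, condEnt]
  exact sum_congr rfl fun b _ => sum_mul_vecEnt fun β => m β b

lemma condEnt_le_sum {Y : Type*} [Fintype Y] {k : ℕ} (mstar m : Y → (Fin k → Y) → ℝ)
    (hms : ∀ β b, 0 < mstar β b) (hm : ∀ β b, 0 ≤ m β b) :
    condEnt m ≤ ∑ β, ∑ b, log ((∑ β', mstar β' b) / mstar β b) * m β b := by
  rw [condEnt_eq_sum, sum_comm, sum_comm (γ := Y)]
  exact sum_le_sum fun b _ =>
    sum_log_div_mul_le (fun β => m β b) (fun β => mstar β b) (fun β => hm β b) (fun β => hms β b)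

theorem stmt6_general {Y : Type*} [Fintype Y] (k : ℕ)
    (mstar m : Y → (Fin k → Y) → ℝ)
    (hms : ∀ β b, 0 < mstar β b) (hm : ∀ β b, 0 ≤ m β b) :
    (condEnt m ≤ condEnt mstar +
        ∑ β : Y, ∑ b : Fin k → Y,
          Real.log ((∑ β' : Y, mstar β' b) / mstar β b) * (m β b - mstar β b)) ∧
    (condEnt m ≤
        ∑ β : Y, ∑ b : Fin k → Y,
          Real.log ((∑ β' : Y, mstar β' b) / mstar β b) * m β b) := by
  have hgibbs := condEnt_le_sum mstar m hms hm
  refine ⟨?_, hgibbs⟩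
  simp only [mul_sub, sum_sub_distrib, ← condEnt_eq_sum mstar]
  linarith

/-- tangent/Gibbs inequality for the conditional empirical entropy:
`H(m) ≤ H(m*) + ∑_{β,b} λ*_{β,b}·(m_{β,b} − m*_{β,b})` with
`λ*_{β,b} = log((∑_{β'} m*_{β',b}) / m*_{β,b})`; equivalently `H(m) ≤ ∑_{β,b} λ*_{β,b}·m_{β,b}`. -/
theorem stmt6 {Y : Type*} [Fintype Y] [Nonempty Y] (k : ℕ) (hk : 0 < k)
    (mstar m : Y → (Fin k → Y) → ℝ)
    (hms : ∀ β b, 0 < mstar β b) (hm : ∀ β b, 0 ≤ m β b) :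
    (condEnt m ≤ condEnt mstar +
        ∑ β : Y, ∑ b : Fin k → Y,
          Real.log ((∑ β' : Y, mstar β' b) / mstar β b) * (m β b - mstar β b)) ∧
    (condEnt m ≤
        ∑ β : Y, ∑ b : Fin k → Y,
          Real.log ((∑ β' : Y, mstar β' b) / mstar β b) * m β b) :=
  stmt6_general k mstar m hms hm
end

section
/- (Theorem 1, converse inclusion on the optimal type class.) Let z^n be a minimizer over y^n ∈ 𝒴^n of the cost H(m(y^n)) + α·d_n(x^n,y^n), set m* = m(z^n), assume every entry of m* is strictly positive, and define λ_{β,b} = log((Σ_{β'∈𝒴} m*_{β',b})/m*_{β,b}). Then every w^n ∈ 𝒴^n that minimizes H(m(y^n)) + α·d_n(x^n,y^n) and satisfies m(w^n) = m* is also a minimizer of the linearized cost Σ_{β∈𝒴} Σ_{b∈𝒴^k} λ_{β,b}·m_{β,b}(y^n) + α·d_n(x^n,y^n) over y^n ∈ 𝒴^n. -/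
/-- The `(k+1)`-th order empirical count matrix of a cyclic sequence `y` of length `n`:
`m_{β,b}(y^n) = (1/n)·|{1 ≤ i ≤ n : (y_{i−k},…,y_{i−1}) = b and y_i = β}|`,
with indices taken cyclically (modulo `n`). -/
noncomputable def empM {Y : Type*} [Fintype Y] [DecidableEq Y] (n k : ℕ) [NeZero n]
    (y : ZMod n → Y) (β : Y) (b : Fin k → Y) : ℝ :=
  ((Finset.univ.filter (fun i : ZMod n =>
      y i = β ∧ ∀ j : Fin k, y (i - (k : ZMod n) + ((j : ℕ) : ZMod n)) = b j)).card : ℝ) / n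

/-- Average per-letter distortion `d_n(x^n, y^n) = (1/n) ∑_{i=1}^n d(x_i, y_i)`. -/
noncomputable def distn {X Y : Type*} (n : ℕ) [NeZero n] (d : X → Y → ℝ)
    (x : ZMod n → X) (y : ZMod n → Y) : ℝ :=
  (∑ i : ZMod n, d (x i) (y i)) / n

/-- The energy (cost of problem (P1)): `𝓔(y^n) = H(m(y^n)) + α·d_n(x^n, y^n)`. -/
noncomputable def energy {X Y : Type*} [Fintype Y] [DecidableEq Y] (n k : ℕ) [NeZero n]
    (x : ZMod n → X) (α : ℝ) (d : X → Y → ℝ) (y : ZMod n → Y) : ℝ :=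
  condEnt (fun β b => empM n k y β b) + α * distn n d x y

/-- The linearized cost (problem (P2)):
`∑_{β,b} λ_{β,b}·m_{β,b}(y^n) + α·d_n(x^n, y^n)`. -/
noncomputable def linCost {X Y : Type*} [Fintype Y] [DecidableEq Y] (n k : ℕ) [NeZero n]
    (x : ZMod n → X) (α : ℝ) (d : X → Y → ℝ) (lam : Y → (Fin k → Y) → ℝ)
    (y : ZMod n → Y) : ℝ :=
  (∑ β : Y, ∑ b : Fin k → Y, lam β b * empM n k y β b) + α * distn n d x y

/-- The coefficient matrix `Λ(q)` of a positive matrix `q`: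
`λ_{β,b} = log((∑_{β'} q_{β',b}) / q_{β,b})`. -/
noncomputable def lamOf {Y : Type*} [Fintype Y] {k : ℕ}
    (q : Y → (Fin k → Y) → ℝ) (β : Y) (b : Fin k → Y) : ℝ :=
  Real.log ((∑ β' : Y, q β' b) / q β b)

/-!
For a positive matrix `q`, the conditional entropy is majorized by the linear functional
`m ↦ ∑ λ(q)_{β,b} m_{β,b}`, with equality at `m = q`: column by column this is Gibbs' inequality.
Hence the linearized cost majorizes the energy and agrees with it on the type class of `m*`, so
for `w` in that class, `linCost w = energy w ≤ energy y ≤ linCost y`.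
-/

open Finset Real

lemma mul_log_div_le_sub {p r : ℝ} (hp : 0 ≤ p) (hr : 0 < r) : p * log (r / p) ≤ r - p := by
  rcases hp.eq_or_lt with rfl | hp
  · simpa using hr.le
  · calc p * log (r / p) ≤ p * (r / p - 1) :=
          mul_le_mul_of_nonneg_left (log_le_sub_one_of_pos (div_pos hr hp)) hp.le
      _ = r - p := by field_simp

lemma sum_mul_log_sum_div_le {ι : Type*} [Fintype ι] {c q : ι → ℝ} (hc : ∀ i, 0 ≤ c i)
    (hq : ∀ i, 0 < q i) :
    ∑ i, c i * log ((∑ j, c j) / c i) ≤ ∑ i, c i * log ((∑ j, q j) / q i) := by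
  set S := ∑ j, c j
  set T := ∑ j, q j
  rcases (sum_nonneg fun i _ => hc i : 0 ≤ S).eq_or_lt with hS | hS
  · have hc0 : ∀ i, c i = 0 := fun i =>
      (sum_eq_zero_iff_of_nonneg fun i _ => hc i).mp hS.symm i (mem_univ i)
    simp [hc0]
  have : Nonempty ι := by
    obtain ⟨i, -, -⟩ := exists_ne_zero_of_sum_ne_zero hS.ne'
    exact ⟨i⟩
  have hT : 0 < T := sum_pos (fun i _ => hq i) univ_nonempty
  have hdiff : ∀ i, c i * log (S / c i) - c i * log (T / q i) = c i * log (S * q i / T / c i) := by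
    intro i
    rcases (hc i).eq_or_lt with h | h
    · simp [← h]
    · rw [← mul_sub, ← log_div (by positivity) (by have := hq i; positivity)]
      congr 2
      field_simp
  have hmass : ∑ i, (S * q i / T - c i) = 0 := by
    rw [sum_sub_distrib, ← sum_div, ← mul_sum, mul_div_cancel_right₀ _ hT.ne', sub_self]
  have key : ∑ i, (c i * log (S / c i) - c i * log (T / q i)) ≤ 0 := by
    rw [← hmass]
    refine sum_le_sum fun i _ => ?_
    rw [hdiff]
    exact mul_log_div_le_sub (hc i) (by have := hq i; positivity)
  rw [sum_sub_distrib] at key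
  linarith

lemma mul_vecEnt_eq_sum {ι : Type*} [Fintype ι] {c : ι → ℝ} (hc : ∀ i, 0 ≤ c i) :
    (∑ i, c i) * vecEnt c = ∑ i, c i * log ((∑ j, c j) / c i) := by
  unfold vecEnt
  split_ifs with h
  · simp [h]
  · have hS : ∑ j, c j ≠ 0 := fun hS => h <| funext fun i =>
      (sum_eq_zero_iff_of_nonneg fun i _ => hc i).mp hS i (mem_univ i)
    rw [mul_sum]
    refine sum_congr rfl fun i _ => ?_
    field_simp

section condEnt

variable {Y : Type*} [Fintype Y] {k : ℕ}

lemma condEnt_eq_sum_mul_log {m : Y → (Fin k → Y) → ℝ} (hm : ∀ β b, 0 ≤ m β b) :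
    condEnt m = ∑ β, ∑ b, m β b * log ((∑ β', m β' b) / m β b) := by
  rw [condEnt, sum_comm]
  exact sum_congr rfl fun b _ => mul_vecEnt_eq_sum fun β => hm β b

lemma condEnt_le_sum_lamOf_mul {m q : Y → (Fin k → Y) → ℝ} (hm : ∀ β b, 0 ≤ m β b)
    (hq : ∀ β b, 0 < q β b) : condEnt m ≤ ∑ β, ∑ b, lamOf q β b * m β b := by
  rw [condEnt_eq_sum_mul_log hm, sum_comm, sum_comm (f := fun β b => lamOf q β b * m β b)]
  refine sum_le_sum fun b _ => ?_
  simpa only [lamOf, mul_comm] using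
    sum_mul_log_sum_div_le (fun β => hm β b) (fun β => hq β b)

lemma condEnt_eq_sum_lamOf_mul {q : Y → (Fin k → Y) → ℝ} (hq : ∀ β b, 0 < q β b) :
    condEnt q = ∑ β, ∑ b, lamOf q β b * q β b := by
  simp only [condEnt_eq_sum_mul_log fun β b => (hq β b).le, lamOf, mul_comm]

end condEnt

section linCost

variable {X Y : Type*} [Fintype Y] [DecidableEq Y] {n k : ℕ} [NeZero n]
  (x : ZMod n → X) (α : ℝ) (d : X → Y → ℝ)

lemma empM_nonneg (y : ZMod n → Y) (β : Y) (b : Fin k → Y) : 0 ≤ empM n k y β b := by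
  unfold empM
  positivity

lemma energy_le_linCost_lamOf {q : Y → (Fin k → Y) → ℝ} (hq : ∀ β b, 0 < q β b)
    (y : ZMod n → Y) : energy n k x α d y ≤ linCost n k x α d (lamOf q) y :=
  add_le_add_left (condEnt_le_sum_lamOf_mul (empM_nonneg y) hq) _

lemma linCost_lamOf_empM_self {y : ZMod n → Y} (hy : ∀ β b, 0 < empM n k y β b) :
    linCost n k x α d (lamOf (empM n k y)) y = energy n k x α d y := by
  rw [linCost, energy, ← condEnt_eq_sum_lamOf_mul hy]

end linCost

theorem stmt9_general {X Y : Type*} [Fintype Y] [DecidableEq Y]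
    (n k : ℕ) [NeZero n]
    (x : ZMod n → X) (α : ℝ)
    (d : X → Y → ℝ)
    (z : ZMod n → Y)
    (hpos : ∀ (β : Y) (b : Fin k → Y), 0 < empM n k z β b)
    (w : ZMod n → Y)
    (hwmin : ∀ y : ZMod n → Y, energy n k x α d w ≤ energy n k x α d y)
    (hwtype : ∀ (β : Y) (b : Fin k → Y), empM n k w β b = empM n k z β b) :
    ∀ y : ZMod n → Y,
      linCost n k x α d (lamOf (empM n k z)) w ≤ linCost n k x α d (lamOf (empM n k z)) y := by
  intro y
  have htype : empM n k w = empM n k z := funext₂ hwtype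
  rw [← htype] at hpos ⊢
  calc linCost n k x α d (lamOf (empM n k w)) w = energy n k x α d w :=
        linCost_lamOf_empM_self x α d hpos
    _ ≤ energy n k x α d y := hwmin y
    _ ≤ linCost n k x α d (lamOf (empM n k w)) y := energy_le_linCost_lamOf x α d hpos y

/-- Theorem 1, converse inclusion on the optimal type class: with `z^n` a
minimizer of the original cost, `m* = m(z^n)` strictly positive and `λ` the tangent
coefficients at `m*`, every minimizer `w^n` of the original cost with `m(w^n) = m*` is also a
minimizer of the linearized cost. -/
theorem stmt9 {X Y : Type*} [Fintype X] [Fintype Y] [Nonempty X] [Nonempty Y] [DecidableEq Y]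
    (n k : ℕ) [NeZero n] (hk : 0 < k)
    (x : ZMod n → X) (α : ℝ) (hα : 0 ≤ α)
    (d : X → Y → ℝ) (hd : ∀ a b, 0 ≤ d a b)
    (z : ZMod n → Y)
    (hz : ∀ y : ZMod n → Y, energy n k x α d z ≤ energy n k x α d y)
    (hpos : ∀ (β : Y) (b : Fin k → Y), 0 < empM n k z β b)
    (w : ZMod n → Y)
    (hwmin : ∀ y : ZMod n → Y, energy n k x α d w ≤ energy n k x α d y)
    (hwtype : ∀ (β : Y) (b : Fin k → Y), empM n k w β b = empM n k z β b) :
    ∀ y : ZMod n → Y,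
      linCost n k x α d (lamOf (empM n k z)) w ≤ linCost n k x α d (lamOf (empM n k z)) y :=
  stmt9_general n k x α d z hpos w hwmin hwtype
end

section
/- (The continuous relaxation lower-bounds the discrete optimum: Ĉ*_n ≤ C*_n.) Let ℓ ≥ k+1 and let 𝓜 be the set of all probability mass functions p on 𝒳^ℓ × 𝒴^ℓ such that (a) for every a^{ℓ−1} ∈ 𝒳^{ℓ−1} and b^{ℓ−1} ∈ 𝒴^{ℓ−1}, Σ_{a∈𝒳,b∈𝒴} p((a_1,…,a_{ℓ−1},a),(b_1,…,b_{ℓ−1},b)) = Σ_{a∈𝒳,b∈𝒴} p((a,a_1,…,a_{ℓ−1}),(b,b_1,…,b_{ℓ−1})) (joint stationarity), and (b) for every a^ℓ ∈ 𝒳^ℓ, Σ_{b^ℓ∈𝒴^ℓ} p(a^ℓ,b^ℓ) = (1/n)·|{1 ≤ i ≤ n : (x_{i−ℓ+1},…,x_i) = a^ℓ}| (consistency with the cyclic ℓ-th order empirical distribution of x^n). For p ∈ 𝓜 define the |𝒴|×|𝒴|^k matrix m(p) by m(p)_{β,b} = Σ_{a^ℓ∈𝒳^ℓ} Σ_{c∈𝒴^{ℓ−k−1}}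 p(a^ℓ,(b_1,…,b_k,β,c_1,…,c_{ℓ−k−1})), and define q(p)(a,b) = Σ_{a'∈𝒳^{ℓ−1},b'∈𝒴^{ℓ−1}} p((a,a'),(b,b')). Then inf_{p∈𝓜} [ H(m(p)) + α·Σ_{a∈𝒳,b∈𝒴} d(a,b)·q(p)(a,b) ] ≤ min_{y^n∈𝒴^n} [ H(m(y^n)) + α·d_n(x^n,y^n) ]. -/
/-- The cyclic `ℓ`-th order empirical distribution of `x^n` (here `ℓ = l + 1`):
`(1/n)·|{1 ≤ i ≤ n : (x_{i−ℓ+1},…,x_i) = a^ℓ}|`. -/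
noncomputable def empX {X : Type*} [DecidableEq X] (n : ℕ) [NeZero n] (l : ℕ)
    (x : ZMod n → X) (a : Fin (l + 1) → X) : ℝ :=
  ((Finset.univ.filter (fun i : ZMod n =>
      ∀ j : Fin (l + 1), x (i - (l : ZMod n) + ((j : ℕ) : ZMod n)) = a j)).card : ℝ) / n

/-- The `(k+1)`-th order marginal, with respect to `𝒴`, of a joint distribution `p` on
`𝒳^ℓ × 𝒴^ℓ` (here `ℓ = l + 1 ≥ k + 1`): `m(p)_{β,b}` is the total `p`-mass of pairs
`(a^ℓ, w^ℓ)` in which the `𝒴`-string `w^ℓ` starts with `(b_1,…,b_k,β)`, i.e.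
`m(p)_{β,b} = ∑_{a^ℓ} ∑_{c ∈ 𝒴^{ℓ−k−1}} p(a^ℓ, (b_1,…,b_k,β,c_1,…,c_{ℓ−k−1}))`. -/
noncomputable def mOf {X Y : Type*} [Fintype X] [Fintype Y] [DecidableEq Y]
    (k l : ℕ) (hkl : k ≤ l)
    (p : (Fin (l + 1) → X) → (Fin (l + 1) → Y) → ℝ) (β : Y) (b : Fin k → Y) : ℝ :=
  ∑ a : Fin (l + 1) → X,
    ∑ w ∈ Finset.univ.filter (fun w : Fin (l + 1) → Y =>
        (∀ j : Fin k, w (Fin.castLE (by omega) j) = b j) ∧ w ⟨k, by omega⟩ = β),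
      p a w

/-- The first-order `(X,Y)`-marginal of a joint distribution `p` on `𝒳^ℓ × 𝒴^ℓ`:
`q(p)(a,b) = ∑_{a'∈𝒳^{ℓ−1}, b'∈𝒴^{ℓ−1}} p((a,a'),(b,b'))`. -/
noncomputable def qOf {X Y : Type*} [Fintype X] [Fintype Y] (l : ℕ)
    (p : (Fin (l + 1) → X) → (Fin (l + 1) → Y) → ℝ) (a : X) (b : Y) : ℝ :=
  ∑ a' : Fin l → X, ∑ b' : Fin l → Y, p (Fin.cons a a') (Fin.cons b b')

/-!
For each `yⁿ`, take for `p` the joint empirical distribution of the cyclic `ℓ`-blocks of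
`(xⁿ, yⁿ)`. Its `𝒳`-marginal is the block distribution of `xⁿ`, it is stationary because
shifting the block ending at `i` by one letter gives the block ending at `i + 1`, its
`(k+1)`-th order `𝒴`-marginal is `m(yⁿ)`, and its first-letter marginal is the empirical
distribution of the pairs `(xᵢ, yᵢ)`. So `p ∈ 𝓜` and its relaxed cost is exactly the energy
of `yⁿ`; as the relaxed cost is nonnegative, the infimum is at most every energy.
-/

open Finset

theorem Fin.sum_eq_sum_cons {A M : Type*} [Fintype A] [AddCommMonoid M] {l : ℕ}
    (f : (Fin (l + 1) → A) → M) : ∑ v, f v = ∑ a, ∑ a', f (Fin.cons a a') := by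
  rw [← (Fin.consEquiv fun _ => A).sum_comp, Fintype.sum_prod_type]
  rfl

theorem Fin.sum_snoc_eq_sum_ite {A M : Type*} [Fintype A] [DecidableEq A] [AddCommMonoid M]
    {l : ℕ} (f : (Fin (l + 1) → A) → M) (a' : Fin l → A) :
    ∑ a, f (Fin.snoc a' a) = ∑ v, if Fin.init v = a' then f v else 0 := by
  rw [← (Fin.snocEquiv fun _ => A).sum_comp, Fintype.sum_prod_type_right]
  simp [Fin.snocEquiv]

theorem Fin.sum_cons_eq_sum_ite {A M : Type*} [Fintype A] [DecidableEq A] [AddCommMonoid M]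
    {l : ℕ} (f : (Fin (l + 1) → A) → M) (a' : Fin l → A) :
    ∑ a, f (Fin.cons a a') = ∑ v, if Fin.tail v = a' then f v else 0 := by
  rw [← (Fin.consEquiv fun _ => A).sum_comp, Fintype.sum_prod_type]
  simp [Fin.consEquiv]

theorem Fintype.sum_comp_add_right {G M : Type*} [AddGroup G] [Fintype G] [AddCommMonoid M]
    (f : G → M) (c : G) : ∑ i, f (i + c) = ∑ i, f i :=
  Fintype.sum_equiv (Equiv.addRight c) _ _ fun _ => rfl

theorem vecEnt_nonneg {ι : Type*} [Fintype ι] {v : ι → ℝ} (hv : ∀ i, 0 ≤ v i) :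
    0 ≤ vecEnt v := by
  unfold vecEnt
  split_ifs
  · exact le_rfl
  refine sum_nonneg fun i _ => ?_
  rcases (hv i).eq_or_lt with h | h
  · simp [← h]
  have hle : v i ≤ ∑ j, v j := single_le_sum (fun j _ => hv j) (mem_univ i)
  exact mul_nonneg (div_nonneg h.le (h.trans_le hle).le)
    (Real.log_nonneg ((one_le_div h).mpr hle))

theorem condEnt_nonneg {Y : Type*} [Fintype Y] {k : ℕ} {m : Y → (Fin k → Y) → ℝ}
    (hm : ∀ β b, 0 ≤ m β b) : 0 ≤ condEnt m :=
  sum_nonneg fun b _ => mul_nonneg (sum_nonneg fun β _ => hm β b) (vecEnt_nonneg (hm · b))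

section Marginals

variable {X Y : Type*} [Fintype X] [Fintype Y] {l : ℕ}
  {p : (Fin (l + 1) → X) → (Fin (l + 1) → Y) → ℝ}

theorem mOf_nonneg [DecidableEq Y] {k : ℕ} (hkl : k ≤ l) (hp : ∀ a w, 0 ≤ p a w)
    (β : Y) (b : Fin k → Y) : 0 ≤ mOf k l hkl p β b :=
  sum_nonneg fun a _ => sum_nonneg fun w _ => hp a w

theorem qOf_nonneg (hp : ∀ a w, 0 ≤ p a w) (a : X) (b : Y) : 0 ≤ qOf l p a b :=
  sum_nonneg fun _ _ => sum_nonneg fun _ _ => hp _ _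

end Marginals

section EmpiricalDistribution

variable {α : Type*} [DecidableEq α] {n : ℕ} [NeZero n]

noncomputable def empDist (f : ZMod n → α) (a : α) : ℝ := #{i | f i = a} / n

theorem empDist_nonneg (f : ZMod n → α) (a : α) : 0 ≤ empDist f a := by
  unfold empDist; positivity

theorem sum_mul_empDist [Fintype α] (f : ZMod n → α) (g : α → ℝ) :
    ∑ a, g a * empDist f a = (∑ i, g (f i)) / n := by
  rw [← Finset.sum_fiberwise univ f (fun i => g (f i)), Finset.sum_div]
  refine Finset.sum_congr rfl fun a _ => ?_
  rw [Finset.sum_congr rfl fun i hi => by rw [(Finset.mem_filter.1 hi).2], sum_const,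
    nsmul_eq_mul, empDist, mul_div_assoc', mul_comm]

end EmpiricalDistribution

def window {A : Type*} {n : ℕ} (l : ℕ) (x : ZMod n → A) (i : ZMod n) : Fin (l + 1) → A :=
  fun j => x (i - l + (j : ℕ))

theorem tail_window {A : Type*} {n : ℕ} (l : ℕ) (x : ZMod n → A) (i : ZMod n) :
    Fin.tail (window l x i) = Fin.init (window l x (i + 1)) := by
  funext j
  simp only [Fin.tail, Fin.init, window, Fin.val_succ, Fin.val_castSucc, Nat.cast_add,
    Nat.cast_one]
  ring_nf

section BlockDistribution

variable {X Y : Type*} [DecidableEq X] [DecidableEq Y]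
  {n : ℕ} [NeZero n] (l : ℕ) (x : ZMod n → X) (y : ZMod n → Y)

noncomputable def blockDist (a : Fin (l + 1) → X) (w : Fin (l + 1) → Y) : ℝ :=
  empDist (fun i => (window l x i, window l y i)) (a, w)

theorem blockDist_nonneg (a : Fin (l + 1) → X) (w : Fin (l + 1) → Y) :
    0 ≤ blockDist l x y a w :=
  empDist_nonneg _ _

variable [Fintype X] [Fintype Y]

theorem sum_sum_mul_blockDist (g : (Fin (l + 1) → X) → (Fin (l + 1) → Y) → ℝ) :
    ∑ a, ∑ w, g a w * blockDist l x y a w = (∑ i, g (window l x i) (window l y i)) / n := by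
  rw [← Fintype.sum_prod_type']
  exact sum_mul_empDist _ fun p : (Fin (l + 1) → X) × (Fin (l + 1) → Y) => g p.1 p.2

theorem sum_sum_blockDist : ∑ a, ∑ w, blockDist l x y a w = 1 := by
  have h := sum_sum_mul_blockDist l x y fun _ _ => 1
  simp only [one_mul, sum_const, card_univ, ZMod.card, nsmul_eq_mul, mul_one] at h
  rw [h, div_self (NeZero.ne _)]

theorem sum_blockDist_eq_empX (a : Fin (l + 1) → X) :
    ∑ w, blockDist l x y a w = empX n l x a := by
  have h := sum_sum_mul_blockDist l x y fun a' _ => if a' = a then 1 else 0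
  simp only [ite_mul, one_mul, zero_mul, sum_ite_irrel, sum_const_zero, sum_ite_eq',
    mem_univ, if_true, sum_boole] at h
  rw [h, empX]
  simp only [window, funext_iff]

theorem sum_snoc_blockDist (a' : Fin l → X) (b' : Fin l → Y) :
    ∑ a, ∑ b, blockDist l x y (Fin.snoc a' a) (Fin.snoc b' b) =
      (∑ i, if Fin.init (window l x i) = a' ∧ Fin.init (window l y i) = b' then 1 else 0) /
        n := by
  rw [← sum_sum_mul_blockDist l x y fun A W =>
      if Fin.init A = a' ∧ Fin.init W = b' then 1 else 0,
    Fin.sum_snoc_eq_sum_ite (fun v => ∑ b, blockDist l x y v (Fin.snoc b' b))]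
  simp only [Fin.sum_snoc_eq_sum_ite, ite_and, ite_mul, one_mul, zero_mul, sum_ite_irrel,
    sum_const_zero]

theorem sum_cons_blockDist (a' : Fin l → X) (b' : Fin l → Y) :
    ∑ a, ∑ b, blockDist l x y (Fin.cons a a') (Fin.cons b b') =
      (∑ i, if Fin.tail (window l x i) = a' ∧ Fin.tail (window l y i) = b' then 1 else 0) /
        n := by
  rw [← sum_sum_mul_blockDist l x y fun A W =>
      if Fin.tail A = a' ∧ Fin.tail W = b' then 1 else 0,
    Fin.sum_cons_eq_sum_ite (fun v => ∑ b, blockDist l x y v (Fin.cons b b'))]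
  simp only [Fin.sum_cons_eq_sum_ite, ite_and, ite_mul, one_mul, zero_mul, sum_ite_irrel,
    sum_const_zero]

theorem blockDist_stationary (a' : Fin l → X) (b' : Fin l → Y) :
    ∑ a, ∑ b, blockDist l x y (Fin.snoc a' a) (Fin.snoc b' b) =
      ∑ a, ∑ b, blockDist l x y (Fin.cons a a') (Fin.cons b b') := by
  simp only [sum_snoc_blockDist, sum_cons_blockDist, tail_window]
  rw [Fintype.sum_comp_add_right fun i =>
    if Fin.init (window l x i) = a' ∧ Fin.init (window l y i) = b' then (1 : ℝ) else 0]

theorem mOf_blockDist {k : ℕ} (hkl : k ≤ l) (β : Y) (b : Fin k → Y) :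
    mOf k l hkl (blockDist l x y) β b = empM n k y β b := by
  have h := sum_sum_mul_blockDist l x y fun _ w =>
    if (∀ j : Fin k, w (Fin.castLE (by omega) j) = b j) ∧ w ⟨k, by omega⟩ = β then 1 else 0
  simp only [ite_mul, one_mul, zero_mul] at h
  rw [mOf]
  simp only [sum_filter]
  rw [h, empM, ← sum_boole, ← Fintype.sum_comp_add_right _ ((l : ZMod n) - (k : ZMod n))]
  congr 1
  refine sum_congr rfl fun i _ => if_congr ?_ rfl rfl
  have hshift : ∀ j : ℕ, i + ((l : ZMod n) - (k : ZMod n)) - l + j = i - k + j :=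
    fun j => by ring
  simp only [window, Fin.val_castLE, hshift, sub_add_cancel]
  tauto

theorem sum_mul_qOf_blockDist (d : X → Y → ℝ) :
    ∑ a, ∑ b, d a b * qOf l (blockDist l x y) a b = distn n d x y := by
  calc ∑ a, ∑ b, d a b * qOf l (blockDist l x y) a b
      = ∑ a, ∑ a', ∑ b, ∑ b', d a b * blockDist l x y (Fin.cons a a') (Fin.cons b b') := by
        simp only [qOf, mul_sum]
        exact sum_congr rfl fun a _ => sum_comm
    _ = ∑ A, ∑ W, d (A 0) (W 0) * blockDist l x y A W := by
        rw [Fin.sum_eq_sum_cons (fun A => ∑ W, d (A 0) (W 0) * blockDist l x y A W)]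
        simp only [Fin.cons_zero,
          Fin.sum_eq_sum_cons (fun W => d _ (W 0) * blockDist l x y _ W)]
    _ = (∑ i, d (x (i + -l)) (y (i + -l))) / n := by
        rw [sum_sum_mul_blockDist]
        simp [window, sub_eq_add_neg]
    _ = distn n d x y := by
        rw [Fintype.sum_comp_add_right (fun i => d (x i) (y i)), distn]

end BlockDistribution

theorem stmt16_general {X Y : Type*} [Fintype X] [Fintype Y] [Nonempty Y]
    [DecidableEq X] [DecidableEq Y]
    (n k l : ℕ) [NeZero n] (hkl : k ≤ l)
    (x : ZMod n → X) (α : ℝ) (hα : 0 ≤ α)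
    (d : X → Y → ℝ) (hd : ∀ a b, 0 ≤ d a b) :
    sInf ((fun p : (Fin (l + 1) → X) → (Fin (l + 1) → Y) → ℝ =>
        condEnt (mOf k l hkl p) + α * ∑ a : X, ∑ b : Y, d a b * qOf l p a b) ''
      {p | (∀ a b, 0 ≤ p a b) ∧
           (∑ a : Fin (l + 1) → X, ∑ b : Fin (l + 1) → Y, p a b = 1) ∧
           (∀ (a' : Fin l → X) (b' : Fin l → Y),
             ∑ a : X, ∑ b : Y, p (Fin.snoc a' a) (Fin.snoc b' b) =
               ∑ a : X, ∑ b : Y, p (Fin.cons a a') (Fin.cons b b')) ∧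
           (∀ a : Fin (l + 1) → X,
             ∑ b : Fin (l + 1) → Y, p a b = empX n l x a)}) ≤
      ⨅ y : ZMod n → Y, energy n k x α d y := by
  refine le_ciInf fun y => csInf_le ⟨0, ?_⟩ ⟨blockDist l x y, ?_, ?_⟩
  · rintro _ ⟨p, ⟨hp, -⟩, rfl⟩
    exact add_nonneg (condEnt_nonneg (mOf_nonneg hkl hp)) (mul_nonneg hα
      (sum_nonneg fun a _ => sum_nonneg fun b _ => mul_nonneg (hd a b) (qOf_nonneg hp a b)))
  · exact ⟨blockDist_nonneg l x y, sum_sum_blockDist l x y, blockDist_stationary l x y,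
      sum_blockDist_eq_empX l x y⟩
  · have hm : mOf k l hkl (blockDist l x y) = fun β b => empM n k y β b :=
      funext₂ (mOf_blockDist l x y hkl)
    simp only [hm, sum_mul_qOf_blockDist, energy]

/-- the continuous relaxation lower-bounds the discrete optimum,
`Ĉ*_n ≤ C*_n`: the infimum over the set `𝓜` of jointly stationary pmfs on `𝒳^ℓ × 𝒴^ℓ`
consistent with the cyclic `ℓ`-th order empirical distribution of `x^n` of
`H(m(p)) + α·∑_{a,b} d(a,b)·q(p)(a,b)` is at most
`min_{y^n} [H(m(y^n)) + α·d_n(x^n,y^n)]`. -/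
theorem stmt16 {X Y : Type*} [Fintype X] [Fintype Y] [Nonempty X] [Nonempty Y]
    [DecidableEq X] [DecidableEq Y]
    (n k l : ℕ) [NeZero n] (hk : 0 < k) (hkl : k ≤ l)
    (x : ZMod n → X) (α : ℝ) (hα : 0 ≤ α)
    (d : X → Y → ℝ) (hd : ∀ a b, 0 ≤ d a b) :
    sInf ((fun p : (Fin (l + 1) → X) → (Fin (l + 1) → Y) → ℝ =>
        condEnt (mOf k l hkl p) + α * ∑ a : X, ∑ b : Y, d a b * qOf l p a b) ''
      {p | (∀ a b, 0 ≤ p a b) ∧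
           (∑ a : Fin (l + 1) → X, ∑ b : Fin (l + 1) → Y, p a b = 1) ∧
           (∀ (a' : Fin l → X) (b' : Fin l → Y),
             ∑ a : X, ∑ b : Y, p (Fin.snoc a' a) (Fin.snoc b' b) =
               ∑ a : X, ∑ b : Y, p (Fin.cons a a') (Fin.cons b b')) ∧
           (∀ a : Fin (l + 1) → X,
             ∑ b : Fin (l + 1) → Y, p a b = empX n l x a)}) ≤
      ⨅ y : ZMod n → Y, energy n k x α d y :=
  stmt16_general n k l hkl x α hα d hd
end
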